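/- Let X : ℝ × ℝ → ℝ³ be smooth with L := ‖X_s‖ > 0 everywhere, T := X_s/L, and let N₁, N₂ : ℝ × ℝ → ℝ³ be smooth so that (T, N₁, N₂) is an orthonormal frame at every point. Suppose there are smooth scalar functions κ₁, κ₂, ω, λ₁, λ₂, λ₃, u, v such that ∂_s T = L(κ₁N₁ − κ₂N₂), ∂_s N₁ = L(−κ₁T + ωN₂), ∂_s N₂ = L(κ₂T − ωN₁), ∂_t T = −λ₁N₂ + λ₂N₁, ∂_t N₁ = −λ₂T + λ₃N₂, ∂_t N₂ = λ₁T − λ₃N₁, and X_t = uN₁ + vN₂. Then, equating the mixed partial derivatives X_{st} = X_{ts}, one has at every point: L_t = L(−uκ₁ + vκ₂), λ₁ = −v_s/L − ωu, and λ₂ = u_s/L − ωv. -/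

import Mathlib

noncomputable def norm3 (a : Fin 3 → ℝ) : ℝ :=
  Real.sqrt ((a 0) ^ 2 + (a 1) ^ 2 + (a 2) ^ 2)

noncomputable def dot3 (a b : Fin 3 → ℝ) : ℝ :=
  a 0 * b 0 + a 1 * b 1 + a 2 * b 2

lemma frame_eq (T N₁ N₂ : Fin 3 → ℝ)
    (hTT : dot3 T T = 1) (h11 : dot3 N₁ N₁ = 1) (h22 : dot3 N₂ N₂ = 1)
    (h01 : dot3 T N₁ = 0) (h02 : dot3 T N₂ = 0) (h12 : dot3 N₁ N₂ = 0)
    {a b c a' b' c' : ℝ}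
    (h : a • T + b • N₁ + c • N₂ = a' • T + b' • N₁ + c' • N₂) :
    a = a' ∧ b = b' ∧ c = c' := by
  have e0 := congrFun h 0
  have e1 := congrFun h 1
  have e2 := congrFun h 2
  simp only [Pi.add_apply, Pi.smul_apply, smul_eq_mul] at e0 e1 e2
  simp only [dot3] at hTT h11 h22 h01 h02 h12
  refine ⟨?_, ?_, ?_⟩
  · linear_combination T 0 * e0 + T 1 * e1 + T 2 * e2 - (a - a') * hTT
      - (b - b') * h01 - (c - c') * h02
  · linear_combination N₁ 0 * e0 + N₁ 1 * e1 + N₁ 2 * e2 - (b - b') * h11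
      - (a - a') * h01 - (c - c') * h12
  · linear_combination N₂ 0 * e0 + N₂ 1 * e1 + N₂ 2 * e2 - (c - c') * h22
      - (a - a') * h02 - (b - b') * h12

lemma clairaut {E : Type*} [NormedAddCommGroup E] [NormedSpace ℝ E]
    (g : ℝ → ℝ → E) (hg : ContDiff ℝ (⊤ : ℕ∞) (fun p : ℝ × ℝ => g p.1 p.2)) (s t : ℝ) :
    deriv (fun τ => deriv (fun σ => g σ τ) s) t
      = deriv (fun σ => deriv (fun τ => g σ τ) t) s := by
  set f : ℝ × ℝ → E := fun p => g p.1 p.2 with hf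
  have hdg : Differentiable ℝ f := hg.differentiable (by simp)
  have hF : ContDiff ℝ (⊤ : ℕ∞) (fderiv ℝ f) := hg.fderiv_right (by simp)
  have hFd : Differentiable ℝ (fderiv ℝ f) := hF.differentiable (by simp)
  set A := fderiv ℝ (fderiv ℝ f) (s, t) with hA
  have hsym : ∀ vv ww, A vv ww = A ww vv :=
    second_derivative_symmetric (fun y => (hdg y).hasFDerivAt) (hFd (s, t)).hasFDerivAt
  have h1 : ∀ a b : ℝ, deriv (fun σ => g σ b) a = fderiv ℝ f (a, b) (1, 0) := fun a b =>
    ((hdg (a, b)).hasFDerivAt.comp_hasDerivAt (l := f) (f := fun x => (x, b)) a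
      (HasDerivAt.prodMk (hasDerivAt_id a) (hasDerivAt_const a b))).deriv
  have h2 : ∀ a b : ℝ, deriv (fun τ => g a τ) b = fderiv ℝ f (a, b) (0, 1) := fun a b =>
    ((hdg (a, b)).hasFDerivAt.comp_hasDerivAt (l := f) (f := fun x => (a, x)) b
      (HasDerivAt.prodMk (hasDerivAt_const b a) (hasDerivAt_id b))).deriv
  have hD1 : HasDerivAt (fun τ => fderiv ℝ f (s, τ)) (A (0, 1)) t :=
    (hFd (s, t)).hasFDerivAt.comp_hasDerivAt t
      (HasDerivAt.prodMk (hasDerivAt_const t s) (hasDerivAt_id t))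
  have hD2 : HasDerivAt (fun σ => fderiv ℝ f (σ, t)) (A (1, 0)) s :=
    (hFd (s, t)).hasFDerivAt.comp_hasDerivAt s
      (HasDerivAt.prodMk (hasDerivAt_id s) (hasDerivAt_const s t))
  have e1 : deriv (fun τ => deriv (fun σ => g σ τ) s) t = A (0, 1) (1, 0) := by
    have hfun : (fun τ => deriv (fun σ => g σ τ) s)
        = fun τ => fderiv ℝ f (s, τ) (1, 0) := funext fun τ => h1 s τ
    rw [hfun]
    have := hD1.clm_apply (hasDerivAt_const t ((1 : ℝ), (0 : ℝ)))
    simpa using this.deriv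
  have e2 : deriv (fun σ => deriv (fun τ => g σ τ) t) s = A (1, 0) (0, 1) := by
    have hfun : (fun σ => deriv (fun τ => g σ τ) t)
        = fun σ => fderiv ℝ f (σ, t) (0, 1) := funext fun σ => h2 σ t
    rw [hfun]
    have := hD2.clm_apply (hasDerivAt_const s ((0 : ℝ), (1 : ℝ)))
    simpa using this.deriv
  rw [e1, e2, hsym]
/-- in the generalized Frenet frame `(T, N₁, N₂)` with evolution
coefficients `λᵢ` and velocity `X_t = uN₁ + vN₂`, equating mixed partials gives
`L_t = L(−uκ₁ + vκ₂)`, `λ₁ = −v_s/L − ωu`, `λ₂ = u_s/L − ωv`. -/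
theorem stmt16
    (X T N₁ N₂ : ℝ → ℝ → Fin 3 → ℝ)
    (κ₁ κ₂ ω lam₁ lam₂ lam₃ u v L : ℝ → ℝ → ℝ)
    (hX : ContDiff ℝ (⊤ : ℕ∞) (fun p : ℝ × ℝ => X p.1 p.2))
    (hN₁smooth : ContDiff ℝ (⊤ : ℕ∞) (fun p : ℝ × ℝ => N₁ p.1 p.2))
    (hN₂smooth : ContDiff ℝ (⊤ : ℕ∞) (fun p : ℝ × ℝ => N₂ p.1 p.2))
    (hκ₁smooth : ContDiff ℝ (⊤ : ℕ∞) (fun p : ℝ × ℝ => κ₁ p.1 p.2))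
    (hκ₂smooth : ContDiff ℝ (⊤ : ℕ∞) (fun p : ℝ × ℝ => κ₂ p.1 p.2))
    (hωsmooth : ContDiff ℝ (⊤ : ℕ∞) (fun p : ℝ × ℝ => ω p.1 p.2))
    (hlam₁smooth : ContDiff ℝ (⊤ : ℕ∞) (fun p : ℝ × ℝ => lam₁ p.1 p.2))
    (hlam₂smooth : ContDiff ℝ (⊤ : ℕ∞) (fun p : ℝ × ℝ => lam₂ p.1 p.2))
    (hlam₃smooth : ContDiff ℝ (⊤ : ℕ∞) (fun p : ℝ × ℝ => lam₃ p.1 p.2))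
    (husmooth : ContDiff ℝ (⊤ : ℕ∞) (fun p : ℝ × ℝ => u p.1 p.2))
    (hvsmooth : ContDiff ℝ (⊤ : ℕ∞) (fun p : ℝ × ℝ => v p.1 p.2))
    (hL : ∀ s t, L s t = norm3 (deriv (fun σ => X σ t) s))
    (hLpos : ∀ s t, 0 < L s t)
    (hT : ∀ s t, T s t = (1 / L s t) • deriv (fun σ => X σ t) s)
    -- orthonormality of the frame (T, N₁, N₂)
    (hN₁unit : ∀ s t, dot3 (N₁ s t) (N₁ s t) = 1)
    (hN₂unit : ∀ s t, dot3 (N₂ s t) (N₂ s t) = 1)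
    (hTN₁ : ∀ s t, dot3 (T s t) (N₁ s t) = 0)
    (hTN₂ : ∀ s t, dot3 (T s t) (N₂ s t) = 0)
    (hN₁N₂ : ∀ s t, dot3 (N₁ s t) (N₂ s t) = 0)
    -- generalized Frenet system in s (∂_q = (1/L)∂_s)
    (hTs : ∀ s t, deriv (fun σ => T σ t) s
      = L s t • (κ₁ s t • N₁ s t - κ₂ s t • N₂ s t))
    (hN₁s : ∀ s t, deriv (fun σ => N₁ σ t) s
      = L s t • ((-κ₁ s t) • T s t + ω s t • N₂ s t))
    (hN₂s : ∀ s t, deriv (fun σ => N₂ σ t) s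
      = L s t • (κ₂ s t • T s t - ω s t • N₁ s t))
    -- time evolution of the frame
    (hTt : ∀ s t, deriv (fun τ => T s τ) t
      = (-lam₁ s t) • N₂ s t + lam₂ s t • N₁ s t)
    (hN₁t : ∀ s t, deriv (fun τ => N₁ s τ) t
      = (-lam₂ s t) • T s t + lam₃ s t • N₂ s t)
    (hN₂t : ∀ s t, deriv (fun τ => N₂ s τ) t
      = lam₁ s t • T s t - lam₃ s t • N₁ s t)
    -- the evolution equation X_t = u N₁ + v N₂
    (hXt : ∀ s t, deriv (fun τ => X s τ) t = u s t • N₁ s t + v s t • N₂ s t) :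
    ∀ s t : ℝ,
      deriv (fun τ => L s τ) t = L s t * (-(u s t) * κ₁ s t + v s t * κ₂ s t) ∧
      lam₁ s t = -(deriv (fun σ => v σ t) s) / L s t - ω s t * u s t ∧
      lam₂ s t = deriv (fun σ => u σ t) s / L s t - ω s t * v s t := by
  intro s t
  have hLne : L s t ≠ 0 := (hLpos s t).ne'
  set f : ℝ × ℝ → (Fin 3 → ℝ) := fun p => X p.1 p.2 with hfdef
  have hdf : Differentiable ℝ f := hX.differentiable (by simp)
  set W : ℝ × ℝ → (Fin 3 → ℝ) := fun p => fderiv ℝ f p (1, 0) with hWdef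
  have hW : ContDiff ℝ (⊤ : ℕ∞) W := (hX.fderiv_right (by simp)).clm_apply contDiff_const
  have hWs : ∀ a b : ℝ, deriv (fun σ => X σ b) a = W (a, b) := fun a b =>
    ((hdf (a, b)).hasFDerivAt.comp_hasDerivAt (l := f) (f := fun x => (x, b)) a
      (HasDerivAt.prodMk (hasDerivAt_id a) (hasDerivAt_const a b))).deriv
  -- smoothness of L and T as functions on the plane
  set q : ℝ × ℝ → ℝ := fun p => (W p 0) ^ 2 + (W p 1) ^ 2 + (W p 2) ^ 2 with hqdef
  have hq : ContDiff ℝ (⊤ : ℕ∞) q := by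
    have h0 := (contDiff_pi.1 hW 0)
    have h1 := (contDiff_pi.1 hW 1)
    have h2 := (contDiff_pi.1 hW 2)
    exact ((h0.pow 2).add (h1.pow 2)).add (h2.pow 2)
  have hLfun : ∀ a b : ℝ, L a b = Real.sqrt (q (a, b)) := by
    intro a b
    rw [hL a b, hWs a b]; rfl
  have hqpos : ∀ p : ℝ × ℝ, 0 < q p := by
    intro p
    have : L p.1 p.2 = Real.sqrt (q (p.1, p.2)) := hLfun p.1 p.2
    have hp : 0 < Real.sqrt (q p) := by
      rw [← this]; exact hLpos p.1 p.2
    exact Real.sqrt_pos.1 hp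
  set Lf : ℝ × ℝ → ℝ := fun p => Real.sqrt (q p) with hLfdef
  have hLfC : ∀ p : ℝ × ℝ, ContDiffAt ℝ (⊤ : ℕ∞) Lf p := fun p =>
    hq.contDiffAt.sqrt (hqpos p).ne'
  have hLfpos : ∀ p : ℝ × ℝ, 0 < Lf p := fun p => Real.sqrt_pos.2 (hqpos p)
  set Tf : ℝ × ℝ → (Fin 3 → ℝ) := fun p => (1 / Lf p) • W p with hTfdef
  have hTfC : ∀ p : ℝ × ℝ, ContDiffAt ℝ (⊤ : ℕ∞) Tf p := fun p =>
    ((contDiffAt_const (c := (1:ℝ))).div (hLfC p) (hLfpos p).ne').smul hW.contDiffAt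
  have hTfun : ∀ a b : ℝ, T a b = Tf (a, b) := by
    intro a b
    rw [hT a b, hWs a b, hLfun a b]
  -- differentiability of partial maps
  have hpt : ∀ τ : ℝ, DifferentiableAt ℝ (fun τ' : ℝ => ((s, τ') : ℝ × ℝ)) τ := fun τ =>
    (differentiableAt_const s).prodMk differentiableAt_id
  have hps : ∀ σ : ℝ, DifferentiableAt ℝ (fun σ' : ℝ => ((σ', t) : ℝ × ℝ)) σ := fun σ =>
    differentiableAt_id.prodMk (differentiableAt_const t)
  have hdL : DifferentiableAt ℝ (fun τ => L s τ) t := by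
    have : (fun τ => L s τ) = fun τ => Lf (s, τ) := funext fun τ => hLfun s τ
    rw [this]
    exact ((hLfC (s, t)).differentiableAt (by simp)).comp t (hpt t)
  have hdT : DifferentiableAt ℝ (fun τ => T s τ) t := by
    have : (fun τ => T s τ) = fun τ => Tf (s, τ) := funext fun τ => hTfun s τ
    rw [this]
    exact ((hTfC (s, t)).differentiableAt (by simp)).comp t (hpt t)
  have hdu : DifferentiableAt ℝ (fun σ => u σ t) s :=
    ((husmooth.differentiable (by simp)) (s, t)).comp (g := fun p : ℝ × ℝ => u p.1 p.2) s (hps s)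
  have hdv : DifferentiableAt ℝ (fun σ => v σ t) s :=
    ((hvsmooth.differentiable (by simp)) (s, t)).comp (g := fun p : ℝ × ℝ => v p.1 p.2) s (hps s)
  have hdN₁ : DifferentiableAt ℝ (fun σ => N₁ σ t) s :=
    ((hN₁smooth.differentiable (by simp)) (s, t)).comp (g := fun p : ℝ × ℝ => N₁ p.1 p.2) s (hps s)
  have hdN₂ : DifferentiableAt ℝ (fun σ => N₂ σ t) s :=
    ((hN₂smooth.differentiable (by simp)) (s, t)).comp (g := fun p : ℝ × ℝ => N₂ p.1 p.2) s (hps s)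
  -- mixed partials
  have hmix := clairaut X hX s t
  -- left side: ∂_t (L T)
  have hLTeq : (fun τ => deriv (fun σ => X σ τ) s) = fun τ => L s τ • T s τ := by
    funext τ
    rw [hT s τ, smul_smul, mul_one_div, div_self (hLpos s τ).ne', one_smul]
  have lhs_eq : deriv (fun τ => deriv (fun σ => X σ τ) s) t
      = deriv (fun τ => L s τ) t • T s t
        + L s t • ((-lam₁ s t) • N₂ s t + lam₂ s t • N₁ s t) := by
    rw [hLTeq, deriv_fun_smul hdL hdT, hTt s t]; ring_nf
  -- right side: ∂_s (u N₁ + v N₂)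
  have hXts : (fun σ => deriv (fun τ => X σ τ) t)
      = fun σ => u σ t • N₁ σ t + v σ t • N₂ σ t := funext fun σ => hXt σ t
  have rhs_eq : deriv (fun σ => deriv (fun τ => X σ τ) t) s
      = (u s t • (L s t • ((-κ₁ s t) • T s t + ω s t • N₂ s t))
          + deriv (fun σ => u σ t) s • N₁ s t)
        + (v s t • (L s t • (κ₂ s t • T s t - ω s t • N₁ s t))
          + deriv (fun σ => v σ t) s • N₂ s t) := by
    rw [hXts, deriv_fun_add (f := fun σ => u σ t • N₁ σ t) (g := fun σ => v σ t • N₂ σ t)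
        (hdu.smul hdN₁) (hdv.smul hdN₂), deriv_fun_smul hdu hdN₁,
      deriv_fun_smul hdv hdN₂, hN₁s s t, hN₂s s t]
  rw [lhs_eq, rhs_eq] at hmix
  -- dot3 T T = 1
  have hDD : dot3 (deriv (fun σ => X σ t) s) (deriv (fun σ => X σ t) s) = L s t ^ 2 := by
    rw [hL s t]
    simp only [norm3, dot3]
    rw [Real.sq_sqrt (by positivity)]
    ring
  have hTT : dot3 (T s t) (T s t) = 1 := by
    rw [hT s t]
    simp only [dot3, Pi.smul_apply, smul_eq_mul] at hDD ⊢
    field_simp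
    linear_combination hDD
  -- canonical forms
  set Lt := deriv (fun τ => L s τ) t with hLt
  set us := deriv (fun σ => u σ t) s with hus
  set vs := deriv (fun σ => v σ t) s with hvs
  have hcanon : Lt • T s t + (L s t * lam₂ s t) • N₁ s t + (-(L s t * lam₁ s t)) • N₂ s t
      = (L s t * (-(u s t) * κ₁ s t + v s t * κ₂ s t)) • T s t
        + (us - L s t * ω s t * v s t) • N₁ s t
        + (vs + L s t * ω s t * u s t) • N₂ s t := by
    calc Lt • T s t + (L s t * lam₂ s t) • N₁ s t + (-(L s t * lam₁ s t)) • N₂ s t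
        = Lt • T s t + L s t • ((-lam₁ s t) • N₂ s t + lam₂ s t • N₁ s t) := by module
      _ = (u s t • (L s t • ((-κ₁ s t) • T s t + ω s t • N₂ s t)) + us • N₁ s t)
            + (v s t • (L s t • (κ₂ s t • T s t - ω s t • N₁ s t)) + vs • N₂ s t) := hmix
      _ = _ := by module
  obtain ⟨hA, hB, hC⟩ := frame_eq (T s t) (N₁ s t) (N₂ s t) hTT (hN₁unit s t)
    (hN₂unit s t) (hTN₁ s t) (hTN₂ s t) (hN₁N₂ s t) hcanon
  refine ⟨hA, ?_, ?_⟩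
  · field_simp
    linear_combination -hC
  · field_simp
    linear_combination hB
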